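/- arXiv:1503.06425 — 3 statements merged into one kernel-verified Lean document; each statement's English description precedes it below -/
import Mathlib

section
/- (Furstenberg intersection lemma) If a dynamical system (X,T) on a compact metric space is weakly mixing, then for any k ≥ 1 and any non-empty open subsets U_1,…,U_k, V_1,…,V_k of X one has ⋂_{i=1}^k N(U_i, V_i) ≠ ∅, where N(U,V) = {n ∈ ℕ : T^n U ∩ V ≠ ∅}. -/
/-!
Weak mixing says that for nonempty open `U₁, V₁, U₂, V₂` some `m` satisfies
`U₁ ∩ T⁻ᵐ U₂ ≠ ∅` and `V₁ ∩ T⁻ᵐ V₂ ≠ ∅`; any `n` with `Tⁿ (U₁ ∩ T⁻ᵐ U₂)` meeting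
`V₁ ∩ T⁻ᵐ V₂` then lies in `N(U₁, V₁) ∩ N(U₂, V₂)`, because `Tⁿ` commutes with `Tᵐ`.
Iterating, a finite intersection `⋂ N(Uᵢ, Vᵢ)` contains a single `N(U, V)` with `U, V` nonempty
open, and this set is nonempty since weak mixing implies topological transitivity.
-/

open Set

section

variable {X : Type*}

def hittingTimes (T : X → X) (U V : Set X) : Set ℕ :=
  {n | (T^[n] '' U ∩ V).Nonempty}

def IsTopologicallyTransitive [TopologicalSpace X] (T : X → X) : Prop :=
  ∀ U V : Set X, IsOpen U → IsOpen V → U.Nonempty → V.Nonempty → (hittingTimes T U V).Nonempty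

theorem mem_hittingTimes_iff {T : X → X} {U V : Set X} {n : ℕ} :
    n ∈ hittingTimes T U V ↔ (U ∩ T^[n] ⁻¹' V).Nonempty :=
  image_inter_nonempty_iff

theorem hittingTimes_prodMap_prod (T : X → X) (U₁ V₁ U₂ V₂ : Set X) :
    hittingTimes (Prod.map T T) (U₁ ×ˢ V₁) (U₂ ×ˢ V₂) =
      hittingTimes T U₁ U₂ ∩ hittingTimes T V₁ V₂ := by
  ext n
  simp only [hittingTimes, mem_ofPred_eq, mem_inter_iff, Prod.map_iterate, prodMap_image_prod,
    prod_inter_prod, prod_nonempty_iff]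

theorem hittingTimes_inter_preimage_subset (T : X → X) (m : ℕ) (U₁ V₁ U₂ V₂ : Set X) :
    hittingTimes T (U₁ ∩ T^[m] ⁻¹' U₂) (V₁ ∩ T^[m] ⁻¹' V₂) ⊆
      hittingTimes T U₁ V₁ ∩ hittingTimes T U₂ V₂ := by
  rintro n ⟨_, ⟨x, ⟨hx₁, hx₂⟩, rfl⟩, hy₁, hy₂⟩
  refine ⟨⟨T^[n] x, mem_image_of_mem _ hx₁, hy₁⟩, ⟨T^[n] (T^[m] x), mem_image_of_mem _ hx₂, ?_⟩⟩
  rwa [← Function.iterate_add_apply, Nat.add_comm, Function.iterate_add_apply]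

variable [TopologicalSpace X] {T : X → X}

theorem IsTopologicallyTransitive.of_prodMap (h : IsTopologicallyTransitive (Prod.map T T)) :
    IsTopologicallyTransitive T := fun U V hU hV hUne hVne => by
  obtain ⟨n, hn⟩ := h (U ×ˢ U) (V ×ˢ V) (hU.prod hU) (hV.prod hV) (hUne.prod hUne) (hVne.prod hVne)
  rw [hittingTimes_prodMap_prod] at hn
  exact ⟨n, hn.1⟩

theorem exists_hittingTimes_subset_inter (hT : Continuous T)
    (hwm : IsTopologicallyTransitive (Prod.map T T)) {U₁ V₁ U₂ V₂ : Set X}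
    (hU₁ : IsOpen U₁) (hV₁ : IsOpen V₁) (hU₂ : IsOpen U₂) (hV₂ : IsOpen V₂)
    (hU₁ne : U₁.Nonempty) (hV₁ne : V₁.Nonempty) (hU₂ne : U₂.Nonempty) (hV₂ne : V₂.Nonempty) :
    ∃ U V : Set X, IsOpen U ∧ IsOpen V ∧ U.Nonempty ∧ V.Nonempty ∧
      hittingTimes T U V ⊆ hittingTimes T U₁ V₁ ∩ hittingTimes T U₂ V₂ := by
  obtain ⟨m, hm⟩ := hwm (U₁ ×ˢ V₁) (U₂ ×ˢ V₂) (hU₁.prod hV₁) (hU₂.prod hV₂)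
    (hU₁ne.prod hV₁ne) (hU₂ne.prod hV₂ne)
  rw [hittingTimes_prodMap_prod, mem_inter_iff, mem_hittingTimes_iff, mem_hittingTimes_iff] at hm
  exact ⟨_, _, hU₁.inter (hU₂.preimage (hT.iterate m)), hV₁.inter (hV₂.preimage (hT.iterate m)),
    hm.1, hm.2, hittingTimes_inter_preimage_subset T m U₁ V₁ U₂ V₂⟩

theorem exists_hittingTimes_subset_iInter [Nonempty X] {ι : Type*} [Finite ι]
    (hT : Continuous T) (hwm : IsTopologicallyTransitive (Prod.map T T)) {U V : ι → Set X}
    (hU : ∀ i, IsOpen (U i)) (hV : ∀ i, IsOpen (V i))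
    (hUne : ∀ i, (U i).Nonempty) (hVne : ∀ i, (V i).Nonempty) :
    ∃ U' V' : Set X, IsOpen U' ∧ IsOpen V' ∧ U'.Nonempty ∧ V'.Nonempty ∧
      hittingTimes T U' V' ⊆ ⋂ i, hittingTimes T (U i) (V i) := by
  classical
  have : Fintype ι := Fintype.ofFinite ι
  suffices ∀ s : Finset ι, ∃ U' V' : Set X, IsOpen U' ∧ IsOpen V' ∧ U'.Nonempty ∧ V'.Nonempty ∧
      hittingTimes T U' V' ⊆ ⋂ i ∈ s, hittingTimes T (U i) (V i) by
    simpa only [Finset.mem_univ, iInter_true] using this Finset.univ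
  intro s
  induction s using Finset.induction_on with
  | empty => exact ⟨univ, univ, isOpen_univ, isOpen_univ, univ_nonempty, univ_nonempty, by simp⟩
  | insert i s _ ih =>
    obtain ⟨U', V', hU', hV', hU'ne, hV'ne, hsub⟩ := ih
    obtain ⟨U'', V'', hU'', hV'', hU''ne, hV''ne, hsub'⟩ := exists_hittingTimes_subset_inter hT hwm
      (hU i) (hV i) hU' hV' (hUne i) (hVne i) hU'ne hV'ne
    refine ⟨U'', V'', hU'', hV'', hU''ne, hV''ne, hsub'.trans ?_⟩
    rw [Finset.set_biInter_insert]
    exact inter_subset_inter_right _ hsub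

end

theorem furstenberg_intersection_lemma_general
    {X : Type*} [MetricSpace X]
    (T : X → X) (hT : Continuous T)
    (hwm : ∀ U V : Set (X × X), IsOpen U → IsOpen V → U.Nonempty → V.Nonempty →
      ∃ n : ℕ, ((fun p : X × X => (T p.1, T p.2))^[n] '' U ∩ V).Nonempty)
    (k : ℕ) (U V : Fin k → Set X)
    (hU : ∀ i, IsOpen (U i)) (hV : ∀ i, IsOpen (V i))
    (hUne : ∀ i, (U i).Nonempty) (hVne : ∀ i, (V i).Nonempty) :
    (⋂ i : Fin k, {n : ℕ | (T^[n] '' U i ∩ V i).Nonempty}).Nonempty := by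
  rcases isEmpty_or_nonempty (Fin k) with hk | ⟨⟨i⟩⟩
  · simp
  have : Nonempty X := (hUne i).to_type
  obtain ⟨U', V', hU', hV', hU'ne, hV'ne, hsub⟩ :=
    exists_hittingTimes_subset_iInter hT hwm hU hV hUne hVne
  exact (IsTopologicallyTransitive.of_prodMap hwm U' V' hU' hV' hU'ne hV'ne).mono hsub

theorem furstenberg_intersection_lemma
    {X : Type*} [MetricSpace X] [CompactSpace X]
    (T : X → X) (hT : Continuous T)
    (hwm : ∀ U V : Set (X × X), IsOpen U → IsOpen V → U.Nonempty → V.Nonempty →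
      ∃ n : ℕ, ((fun p : X × X => (T p.1, T p.2))^[n] '' U ∩ V).Nonempty)
    (k : ℕ) (hk : 1 ≤ k) (U V : Fin k → Set X)
    (hU : ∀ i, IsOpen (U i)) (hV : ∀ i, IsOpen (V i))
    (hUne : ∀ i, (U i).Nonempty) (hVne : ∀ i, (V i).Nonempty) :
    (⋂ i : Fin k, {n : ℕ | (T^[n] '' U i ∩ V i).Nonempty}).Nonempty :=
  furstenberg_intersection_lemma_general T hT hwm k U V hU hV hUne hVne
end

section
/- (Huang–Ye equivalences, partial) Let (X,T) be a dynamical system on a compact metric space. Then (X,T) is sensitive with sensitivity constant δ if and only if the set {(x,y) ∈ X × X : limsup_{n→∞} d(T^n x, T^n y) > δ'} is dense in X × X for some δ' > 0. -/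
/-!
If `T` is sensitive with constant `δ`, then for each `N` the pairs whose orbits are more than `δ/2`
apart at some time `n ≥ N` form an open dense subset of `X × X`. Openness is continuity of the
iterates. For density near `(x, z)`, sensitivity gives `y` close to `x` whose orbit is more than `δ`
away from that of `x` at a time `n`, and `n ≥ N` because the first `N` iterates are continuous at
`x`; by the triangle inequality `(x, z)` or `(y, z)` is `δ/2`-apart at time `n`. By Baire, the pairs
that are `δ/2`-apart infinitely often are dense, and their `limsup` is at least `δ/2`.
Conversely, a pair near `(x, x)` that is `δ'`-apart at time `n` has a coordinate whose orbit is more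
than `δ'/2` away from `T^[n] x` at time `n`.
-/

open Filter Metric Set Topology

section

variable {X : Type*} [MetricSpace X]

def IsSensitive (T : X → X) (δ : ℝ) : Prop :=
  ∀ x : X, ∀ ε > 0, ∃ y : X, dist x y < ε ∧ ∃ n : ℕ, δ < dist (T^[n] x) (T^[n] y)

lemma half_lt_dist_or_half_lt_dist {r : ℝ} {x z : X} (h : r < dist x z) (y : X) :
    r / 2 < dist x y ∨ r / 2 < dist y z := by
  by_contra! hle
  linarith [dist_triangle x y z]

lemma frequently_lt_dist_of_lt_limsup {u v : ℕ → X} {r : ℝ}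
    (h : r < limsup (fun n => dist (u n) (v n)) atTop) : ∃ᶠ n in atTop, r < dist (u n) (v n) :=
  frequently_lt_of_lt_limsup (isCoboundedUnder_le_of_le atTop fun _ => dist_nonneg) h

lemma le_limsup_dist_of_frequently_le [BoundedSpace X] {u v : ℕ → X} {r : ℝ}
    (h : ∃ᶠ n in atTop, r ≤ dist (u n) (v n)) : r ≤ limsup (fun n => dist (u n) (v n)) atTop :=
  le_limsup_of_frequently_le h <| isBoundedUnder_of ⟨diam (univ : Set X), fun _ =>
    dist_le_diam_of_mem (Bornology.isBounded_univ.2 ‹_›) (mem_univ _) (mem_univ _)⟩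

lemma isSensitive_half_of_dense {T : X → X} {δ : ℝ}
    (h : Dense {p : X × X | ∃ n, δ < dist (T^[n] p.1) (T^[n] p.2)}) : IsSensitive T (δ / 2) := by
  intro x ε hε
  obtain ⟨p, hp, n, hn⟩ := Metric.dense_iff.1 h (x, x) ε hε
  rw [mem_ball, Prod.dist_eq, max_lt_iff] at hp
  rcases half_lt_dist_or_half_lt_dist hn (T^[n] x) with h₁ | h₂
  · exact ⟨p.1, by rw [dist_comm]; exact hp.1, n, by rw [dist_comm]; exact h₁⟩
  · exact ⟨p.2, by rw [dist_comm]; exact hp.2, n, h₂⟩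

lemma isOpen_setOf_exists_ge_lt_dist_iterate {T : X → X} (hT : Continuous T) (r : ℝ) (N : ℕ) :
    IsOpen {p : X × X | ∃ n ≥ N, r < dist (T^[n] p.1) (T^[n] p.2)} := by
  have hunion : {p : X × X | ∃ n ≥ N, r < dist (T^[n] p.1) (T^[n] p.2)} =
      ⋃ n ≥ N, {p : X × X | r < dist (T^[n] p.1) (T^[n] p.2)} := by
    ext; simp
  rw [hunion]
  exact isOpen_biUnion fun n _ => isOpen_lt continuous_const <|
    ((hT.iterate n).comp continuous_fst).dist ((hT.iterate n).comp continuous_snd)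

namespace IsSensitive

variable {T : X → X} {δ : ℝ}

lemma exists_ge (hs : IsSensitive T δ) (hT : Continuous T) (hδ : 0 < δ) (x : X) {ε : ℝ}
    (hε : 0 < ε) (N : ℕ) : ∃ y, dist x y < ε ∧ ∃ n ≥ N, δ < dist (T^[n] x) (T^[n] y) := by
  have hclose : ∀ᶠ y in 𝓝 x, ∀ k ∈ Finset.range N, dist (T^[k] y) (T^[k] x) < δ :=
    (eventually_all_finset _).2 fun k _ =>
      (hT.iterate k).continuousAt.eventually (ball_mem_nhds _ hδ)
  obtain ⟨η, hη, hηclose⟩ := Metric.eventually_nhds_iff.1 hclose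
  obtain ⟨y, hy, n, hn⟩ := hs x (min ε η) (lt_min hε hη)
  refine ⟨y, hy.trans_le (min_le_left _ _), n, ?_, hn⟩
  by_contra! hnN
  have hyx : dist y x < η := by rw [dist_comm]; exact hy.trans_le (min_le_right _ _)
  rw [dist_comm] at hn
  exact (hηclose hyx n (Finset.mem_range.2 hnN)).not_gt hn

lemma dense_setOf_exists_ge (hs : IsSensitive T δ) (hT : Continuous T) (hδ : 0 < δ) (N : ℕ) :
    Dense {p : X × X | ∃ n ≥ N, δ / 2 < dist (T^[n] p.1) (T^[n] p.2)} := by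
  refine Metric.dense_iff.2 fun ⟨x, z⟩ ε hε => ?_
  obtain ⟨y, hy, n, hnN, hn⟩ := hs.exists_ge hT hδ x hε N
  rcases half_lt_dist_or_half_lt_dist hn (T^[n] z) with h | h
  · exact ⟨(x, z), mem_ball_self hε, n, hnN, h⟩
  · refine ⟨(y, z), ?_, n, hnN, by rw [dist_comm]; exact h⟩
    rw [mem_ball, Prod.dist_eq, dist_self, dist_comm]
    exact max_lt hy hε

lemma dense_setOf_frequently [CompleteSpace X] (hs : IsSensitive T δ) (hT : Continuous T)
    (hδ : 0 < δ) :
    Dense {p : X × X | ∃ᶠ n in atTop, δ / 2 < dist (T^[n] p.1) (T^[n] p.2)} := by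
  have hinter : {p : X × X | ∃ᶠ n in atTop, δ / 2 < dist (T^[n] p.1) (T^[n] p.2)} =
      ⋂ N, {p : X × X | ∃ n ≥ N, δ / 2 < dist (T^[n] p.1) (T^[n] p.2)} := by
    ext; simp [frequently_atTop]
  rw [hinter]
  exact dense_iInter_of_isOpen (isOpen_setOf_exists_ge_lt_dist_iterate hT _)
    (hs.dense_setOf_exists_ge hT hδ)

end IsSensitive

end

theorem huang_ye_sensitivity_equivalence
    {X : Type*} [MetricSpace X] [CompactSpace X]
    (T : X → X) (hT : Continuous T) :
    (∃ δ > 0, ∀ x : X, ∀ ε > 0, ∃ y : X, dist x y < ε ∧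
      ∃ n : ℕ, dist (T^[n] x) (T^[n] y) > δ) ↔
    (∃ δ' > 0, Dense {p : X × X |
      Filter.limsup (fun n : ℕ => dist (T^[n] p.1) (T^[n] p.2)) Filter.atTop > δ'}) := by
  constructor
  · rintro ⟨δ, hδ, hs⟩
    refine ⟨δ / 4, by positivity,
      (IsSensitive.dense_setOf_frequently (T := T) hs hT hδ).mono fun p hp => ?_⟩
    exact (by linarith : δ / 4 < δ / 2).trans_le
      (le_limsup_dist_of_frequently_le (hp.mono fun _ => le_of_lt))
  · rintro ⟨δ', hδ', hdense⟩
    exact ⟨δ' / 2, by positivity, isSensitive_half_of_dense <|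
      hdense.mono fun p hp => (frequently_lt_dist_of_lt_limsup hp).exists⟩
end

section
/- If a non-trivial dynamical system (X,T) on a compact metric space is weakly mixing, then (X,T) is Li-Yorke δ-chaotic for some δ > 0: there exists an uncountable set C ⊆ X such that for all distinct x, y ∈ C, liminf_n d(T^n x, T^n y) = 0 and limsup_n d(T^n x, T^n y) > δ. -/
/-!
Weak mixing says that `T × T` is topologically transitive, so the pairs whose `T × T`-orbit is
dense in `X × X` form a residual set. Transitivity of `T × T` also forbids isolated points, and then
a dense orbit returns infinitely often to every open set: near the diagonal, which forces
`liminf = 0`, and near a pair `(a, b)` with `a ≠ b`, which forces `limsup ≥ dist a b`.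
Mycielski's theorem produces an uncountable set all of whose distinct pairs lie in a given residual
subset of `X × X`: choose, by a Cantor scheme, open sets `U s` indexed by finite binary words so
that at level `n` the products `closure (U s) ×ˢ closure (U t)`, `s ≠ t`, lie in the `n`-th
dense open set and off the diagonal; compactness gives one point per infinite branch.
-/

open Filter Set Topology Function

section Shrinking

variable {X : Type*} [TopologicalSpace X] [RegularSpace X] {D : Set (X × X)}

theorem exists_open_closure_prod_subset (hDo : IsOpen D) (hDd : Dense D) {U₁ U₂ : Set X}
    (h₁ : IsOpen U₁) (h₂ : IsOpen U₂) (hne₁ : U₁.Nonempty) (hne₂ : U₂.Nonempty) :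
    ∃ V₁ V₂ : Set X, IsOpen V₁ ∧ IsOpen V₂ ∧ V₁.Nonempty ∧ V₂.Nonempty ∧ V₁ ⊆ U₁ ∧ V₂ ⊆ U₂ ∧
      closure V₁ ×ˢ closure V₂ ⊆ D := by
  obtain ⟨⟨x₁, x₂⟩, ⟨hx₁, hx₂⟩, hxD⟩ := hDd.inter_open_nonempty _ (h₁.prod h₂) (hne₁.prod hne₂)
  obtain ⟨u₁, hu₁, u₂, hu₂, hu⟩ :=
    mem_nhds_prod_iff.1 ((hDo.inter (h₁.prod h₂)).mem_nhds ⟨hxD, hx₁, hx₂⟩)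
  obtain ⟨V₁, ⟨hxV₁, hV₁⟩, hV₁u⟩ := (hasBasis_opens_closure x₁).mem_iff.1 hu₁
  obtain ⟨V₂, ⟨hxV₂, hV₂⟩, hV₂u⟩ := (hasBasis_opens_closure x₂).mem_iff.1 hu₂
  have hbox : closure V₁ ×ˢ closure V₂ ⊆ D ∩ U₁ ×ˢ U₂ := (prod_mono hV₁u hV₂u).trans hu
  refine ⟨V₁, V₂, hV₁, hV₂, ⟨x₁, hxV₁⟩, ⟨x₂, hxV₂⟩, fun z hz => ?_, fun z hz => ?_,
    hbox.trans inter_subset_left⟩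
  · exact (hbox (mk_mem_prod (subset_closure hz) (subset_closure hxV₂))).2.1
  · exact (hbox (mk_mem_prod (subset_closure hxV₁) (subset_closure hz))).2.2

variable {ι : Type*} [DecidableEq ι] {V : ι → Set X}

theorem exists_refinement_closure_prod_subset_of_ne (hDo : IsOpen D) (hDd : Dense D)
    (hVo : ∀ k, IsOpen (V k)) (hVne : ∀ k, (V k).Nonempty) {i j : ι} (hij : i ≠ j) :
    ∃ W : ι → Set X, (∀ k, IsOpen (W k) ∧ (W k).Nonempty ∧ W k ⊆ V k) ∧
      closure (W i) ×ˢ closure (W j) ⊆ D := by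
  obtain ⟨W₁, W₂, hW₁, hW₂, hne₁, hne₂, hsub₁, hsub₂, hD⟩ :=
    exists_open_closure_prod_subset hDo hDd (hVo i) (hVo j) (hVne i) (hVne j)
  refine ⟨update (update V i W₁) j W₂, fun k => ?_, by simpa [hij] using hD⟩
  rcases eq_or_ne k j with rfl | hkj
  · simp [*]
  rcases eq_or_ne k i with rfl | hki
  · simp [*]
  · simp [*]

theorem exists_refinement_closure_prod_subset [Fintype ι] (hDo : IsOpen D) (hDd : Dense D)
    (hVo : ∀ k, IsOpen (V k)) (hVne : ∀ k, (V k).Nonempty) :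
    ∃ W : ι → Set X, (∀ k, IsOpen (W k) ∧ (W k).Nonempty ∧ W k ⊆ V k) ∧
      ∀ i j, i ≠ j → closure (W i) ×ˢ closure (W j) ⊆ D := by
  suffices ∀ P : Finset (ι × ι), ∃ W : ι → Set X, (∀ k, IsOpen (W k) ∧ (W k).Nonempty ∧ W k ⊆ V k) ∧
      ∀ p ∈ P, p.1 ≠ p.2 → closure (W p.1) ×ˢ closure (W p.2) ⊆ D by
    obtain ⟨W, hW, hWD⟩ := this Finset.univ
    exact ⟨W, hW, fun i j hij => hWD (i, j) (Finset.mem_univ _) hij⟩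
  intro P
  induction P using Finset.induction_on with
  | empty => exact ⟨V, fun k => ⟨hVo k, hVne k, subset_rfl⟩, by simp⟩
  | insert q P _ ih =>
    obtain ⟨W, hW, hWD⟩ := ih
    by_cases hq : q.1 = q.2
    · refine ⟨W, hW, fun p hp hp' => ?_⟩
      rcases Finset.mem_insert.1 hp with rfl | hp
      exacts [absurd hq hp', hWD p hp hp']
    obtain ⟨W', hW', hW'D⟩ := exists_refinement_closure_prod_subset_of_ne hDo hDd
      (fun k => (hW k).1) (fun k => (hW k).2.1) hq
    refine ⟨W', fun k => ⟨(hW' k).1, (hW' k).2.1, (hW' k).2.2.trans (hW k).2.2⟩,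
      fun p hp hp' => ?_⟩
    rcases Finset.mem_insert.1 hp with rfl | hp
    · exact hW'D
    · exact (prod_mono (closure_mono (hW' p.1).2.2) (closure_mono (hW' p.2).2.2)).trans
        (hWD p hp hp')

end Shrinking

namespace Mycielski

variable {X : Type*} [TopologicalSpace X]

structure Level (D : ℕ → Set (X × X)) (n : ℕ) where
  U : (Fin n → Bool) → Set X
  isOpen : ∀ s, IsOpen (U s)
  nonempty : ∀ s, (U s).Nonempty
  closure_prod_subset : ∀ s t, s ≠ t → closure (U s) ×ˢ closure (U t) ⊆ D n

variable {D : ℕ → Set (X × X)}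

def Level.zero [Nonempty X] : Level D 0 where
  U _ := univ
  isOpen _ := isOpen_univ
  nonempty _ := univ_nonempty
  closure_prod_subset s t hst := absurd (Subsingleton.elim s t) hst

theorem Level.exists_succ [RegularSpace X] (hDo : ∀ n, IsOpen (D n)) (hDd : ∀ n, Dense (D n))
    {n : ℕ} (L : Level D n) :
    ∃ L' : Level D (n + 1), ∀ s : Fin (n + 1) → Bool, L'.U s ⊆ L.U (s ∘ Fin.castSucc) := by
  obtain ⟨W, hW, hWD⟩ := exists_refinement_closure_prod_subset (hDo (n + 1)) (hDd (n + 1))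
    (V := fun s => L.U (s ∘ Fin.castSucc)) (fun _ => L.isOpen _) (fun _ => L.nonempty _)
  exact ⟨⟨W, fun s => (hW s).1, fun s => (hW s).2.1, hWD⟩, fun s => (hW s).2.2⟩

theorem exists_prod_mem_of_restrict_ne [Nonempty X] [CompactSpace X] [RegularSpace X]
    (hDo : ∀ n, IsOpen (D n)) (hDd : ∀ n, Dense (D n)) :
    ∃ x : (ℕ → Bool) → X, ∀ σ τ n,
      (fun i : Fin n => σ i) ≠ (fun i => τ i) → (x σ, x τ) ∈ D n := by
  choose succ hsucc using fun n (L : Level D n) => L.exists_succ hDo hDd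
  let L : ∀ n, Level D n := fun n => Nat.rec Level.zero succ n
  let K (σ : ℕ → Bool) (n : ℕ) : Set X := closure ((L n).U fun i => σ i)
  have hK : ∀ σ, (⋂ n, K σ n).Nonempty := fun σ =>
    IsCompact.nonempty_iInter_of_sequence_nonempty_isCompact_isClosed (K σ)
      (fun n => closure_mono (hsucc n (L n) _)) (fun n => ((L n).nonempty _).closure)
      isClosed_closure.isCompact (fun _ => isClosed_closure)
  choose x hx using hK
  exact ⟨x, fun σ τ n hne =>
    (L n).closure_prod_subset _ _ hne ⟨mem_iInter.1 (hx σ) n, mem_iInter.1 (hx τ) n⟩⟩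

end Mycielski

section Perfect

variable {X : Type*} [TopologicalSpace X] [PerfectSpace X]

instance {Y : Type*} [TopologicalSpace Y] : PerfectSpace (X × Y) := by
  refine perfectSpace_iff_forall_not_isolated.2 fun ⟨x, y⟩ => ?_
  have : Tendsto (fun x' => (x', y)) (𝓝[≠] x) (𝓝[≠] (x, y)) :=
    tendsto_nhdsWithin_of_tendsto_nhds_of_eventually_within _
      ((continuous_id.prodMk continuous_const).tendsto' x _ rfl |>.mono_left nhdsWithin_le_nhds)
      (eventually_nhdsWithin_of_forall fun x' hx' => by simpa using hx')
  exact this.neBot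

theorem dense_compl_diagonal : Dense (diagonal X)ᶜ := by
  rw [← interior_eq_empty_iff_dense_compl, eq_empty_iff_forall_notMem]
  rintro ⟨x, y⟩ h
  obtain rfl : x = y := mem_diagonal_iff.1 (interior_subset h)
  obtain ⟨u, hu, v, hv, huv⟩ := mem_nhds_prod_iff.1 (mem_interior_iff_mem_nhds.1 h)
  obtain ⟨z, hzx, hzu, hzv⟩ := Filter.nonempty_of_mem (inter_mem_nhdsWithin {x}ᶜ (inter_mem hu hv))
  exact hzx (mem_diagonal_iff.1 (huv (mk_mem_prod (mem_of_mem_nhds hu) hzv))).symm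

theorem DenseRange.mapClusterPt_atTop [T1Space X] {u : ℕ → X} (hu : DenseRange u) (x : X) :
    MapClusterPt x atTop u := by
  refine mapClusterPt_iff_frequently.2 fun s hs => frequently_atTop.2 fun N => ?_
  have htail : Dense (range u \ u '' {n | n < N}) := Dense.sdiff_finite hu ((finite_lt_nat N).image u)
  obtain ⟨_, hz, ⟨n, rfl⟩, hnN⟩ :=
    htail.inter_open_nonempty (interior s) isOpen_interior ⟨x, mem_interior_iff_mem_nhds.2 hs⟩
  exact ⟨n, not_lt.1 fun h => hnN (mem_image_of_mem u h), interior_subset hz⟩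

end Perfect

instance : Uncountable (ℕ → Bool) := by
  rw [← not_countable_iff, ← Cardinal.mk_le_aleph0_iff]
  simpa using Cardinal.aleph0_lt_continuum

theorem exists_not_countable_forall_prod_mem_of_mem_residual {X : Type*} [TopologicalSpace X]
    [CompactSpace X] [T2Space X] [PerfectSpace X] [Nonempty X] {G : Set (X × X)}
    (hG : G ∈ residual (X × X)) :
    ∃ C : Set X, ¬ C.Countable ∧ ∀ x ∈ C, ∀ y ∈ C, x ≠ y → (x, y) ∈ G := by
  obtain ⟨_, htG, htGδ, htd⟩ := mem_residual.1 hG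
  obtain ⟨f, hfo, rfl⟩ := isGδ_iff_eq_iInter_nat.1 htGδ
  let D (n : ℕ) : Set (X × X) := (⋂ m ∈ Iio n, f m) ∩ (diagonal X)ᶜ
  have hfo' : ∀ n, IsOpen (⋂ m ∈ Iio n, f m) := fun n =>
    (finite_Iio n).isOpen_biInter fun m _ => hfo m
  have hDd : ∀ n, Dense (D n) := fun n =>
    (dense_biInter_of_isOpen (fun m _ => hfo m) (to_countable _)
      fun m _ => htd.mono (iInter_subset f m)).inter_of_isOpen_left dense_compl_diagonal (hfo' n)
  obtain ⟨x, hx⟩ := Mycielski.exists_prod_mem_of_restrict_ne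
    (fun n => (hfo' n).inter isClosed_diagonal.isOpen_compl) hDd
  have hpair : ∀ σ τ, σ ≠ τ → (x σ, x τ) ∈ (⋂ n, f n) ∩ (diagonal X)ᶜ := by
    intro σ τ hστ
    obtain ⟨j, hj⟩ := Function.ne_iff.1 hστ
    have hD : ∀ m, (x σ, x τ) ∈ D (max (j + 1) (m + 1)) := fun m =>
      hx σ τ _ fun h => hj (congrFun h ⟨j, by omega⟩)
    exact ⟨mem_iInter.2 fun m => mem_iInter₂.1 (hD m).1 m (by simp), (hD 0).2⟩
  have hinj : Injective x := fun σ τ h => by_contra fun hστ => (hpair σ τ hστ).2 h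
  refine ⟨range x, fun h => not_countable_univ (by simpa using h.preimage hinj), ?_⟩
  rintro _ ⟨σ, rfl⟩ _ ⟨τ, rfl⟩ hne
  exact htG (hpair σ τ (ne_of_apply_ne x hne)).1

section Dynamics

variable {Y : Type*} [TopologicalSpace Y]

def TopologicallyTransitive (F : Y → Y) : Prop :=
  ∀ U V : Set Y, IsOpen U → IsOpen V → U.Nonempty → V.Nonempty →
    ∃ n : ℕ, (F^[n] '' U ∩ V).Nonempty

theorem TopologicallyTransitive.eventually_residual_denseRange [SecondCountableTopology Y]
    {F : Y → Y} (htrans : TopologicallyTransitive F) (hF : Continuous F) :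
    ∀ᶠ y in residual Y, DenseRange fun n => F^[n] y := by
  obtain ⟨B, hBc, hB, hBasis⟩ := TopologicalSpace.exists_countable_basis Y
  have hvisit : ∀ V ∈ B, (⋃ n, F^[n] ⁻¹' V) ∈ residual Y := fun V hV => by
    refine residual_of_dense_open
      (isOpen_iUnion fun n => (hF.iterate n).isOpen_preimage _ (hBasis.isOpen hV)) ?_
    refine dense_iff_inter_open.2 fun U hU hUne => ?_
    obtain ⟨n, _, ⟨y, hy, rfl⟩, hyV⟩ := htrans U V hU (hBasis.isOpen hV) hUne
      (nonempty_iff_ne_empty.2 fun h => hB (h ▸ hV))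
    exact ⟨y, hy, mem_iUnion.2 ⟨n, hyV⟩⟩
  filter_upwards [(countable_bInter_mem hBc).2 hvisit] with y hy
  refine hBasis.dense_iff.2 fun V hV _ => ?_
  obtain ⟨n, hn⟩ := mem_iUnion.1 (mem_iInter₂.1 hy V hV)
  exact ⟨_, hn, mem_range_self n⟩

theorem TopologicallyTransitive.perfectSpace_of_prodMap [T1Space Y] [Nontrivial Y] {T : Y → Y}
    (h : TopologicallyTransitive (Prod.map T T)) : PerfectSpace Y := by
  refine perfectSpace_iff_forall_not_isolated.2 fun x => ?_
  rw [neBot_iff, Ne, ← isOpen_singleton_iff_punctured_nhds]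
  intro hx
  obtain ⟨n, _, ⟨p, hp, rfl⟩, h₁, h₂⟩ := h ({x} ×ˢ {x}) ({x} ×ˢ {x}ᶜ)
    (hx.prod hx) (hx.prod isClosed_singleton.isOpen_compl) (by simp)
    ((singleton_nonempty x).prod (exists_ne x))
  obtain rfl : p = (x, x) := Prod.ext hp.1 hp.2
  simp_all

end Dynamics

section Metric

variable {X : Type*} [PseudoMetricSpace X] [BoundedSpace X] {u : ℕ → X × X}

theorem isBoundedUnder_le_dist : IsBoundedUnder (· ≤ ·) atTop fun n => dist (u n).1 (u n).2 :=
  isBoundedUnder_of ⟨Metric.diam (univ : Set X), fun _ =>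
    Metric.dist_le_diam_of_mem (Bornology.IsBounded.all _) (mem_univ _) (mem_univ _)⟩

theorem MapClusterPt.liminf_dist_eq_zero {a : X} (ha : MapClusterPt (a, a) atTop u) :
    Filter.liminf (fun n => dist (u n).1 (u n).2) atTop = 0 := by
  have h := ha.continuousAt_comp (continuous_fst.dist continuous_snd).continuousAt
  refine le_antisymm ?_ (le_liminf_of_le isBoundedUnder_le_dist.isCoboundedUnder_ge
    (Eventually.of_forall fun _ => dist_nonneg))
  exact (h.liminf_le (isBoundedUnder_of ⟨0, fun _ => dist_nonneg⟩)).trans_eq (dist_self a)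

theorem MapClusterPt.dist_le_limsup_dist {a b : X} (hab : MapClusterPt (a, b) atTop u) :
    dist a b ≤ Filter.limsup (fun n => dist (u n).1 (u n).2) atTop :=
  (hab.continuousAt_comp (continuous_fst.dist continuous_snd).continuousAt).le_limsup
    isBoundedUnder_le_dist

end Metric

theorem iwanik_weak_mixing_LiYorke_chaotic
    {X : Type*} [MetricSpace X] [CompactSpace X]
    (T : X → X) (hT : Continuous T)
    (hnontriv : ∃ a b : X, a ≠ b)
    (hwm : ∀ U V : Set (X × X), IsOpen U → IsOpen V → U.Nonempty → V.Nonempty →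
      ∃ n : ℕ, ((fun p : X × X => (T p.1, T p.2))^[n] '' U ∩ V).Nonempty) :
    ∃ δ > 0, ∃ C : Set X, ¬ C.Countable ∧
      ∀ x ∈ C, ∀ y ∈ C, x ≠ y →
        Filter.liminf (fun n : ℕ => dist (T^[n] x) (T^[n] y)) Filter.atTop = 0 ∧
        Filter.limsup (fun n : ℕ => dist (T^[n] x) (T^[n] y)) Filter.atTop > δ := by
  have htrans : TopologicallyTransitive (Prod.map T T) := hwm
  have : Nontrivial X := ⟨hnontriv⟩
  have : PerfectSpace X := htrans.perfectSpace_of_prodMap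
  obtain ⟨a, b, hab⟩ := hnontriv
  obtain ⟨C, hC, hCorbit⟩ := exists_not_countable_forall_prod_mem_of_mem_residual
    (htrans.eventually_residual_denseRange (hT.prodMap hT))
  refine ⟨dist a b / 4, div_pos (dist_pos.2 hab) four_pos, C, hC, fun x hx y hy hxy => ?_⟩
  have hcluster (p : X × X) : MapClusterPt p atTop fun n => (T^[n] x, T^[n] y) := by
    simpa only [Prod.map_iterate, Prod.map_apply] using (hCorbit x hx y hy hxy).mapClusterPt_atTop p
  refine ⟨(hcluster (a, a)).liminf_dist_eq_zero, ?_⟩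
  have hlimsup := (hcluster (a, b)).dist_le_limsup_dist
  have hdist := dist_pos.2 hab
  linarith
end
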